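/- arXiv:1209.0305 — 4 statements merged into one kernel-verified Lean document; each statement's English description precedes it below -/
import Mathlib

section
/- Let μ ∈ ℝ, σ > 0 with μ = σ²/2 (i.e. Merton ratio π* = 1/2). Then the function h₁(x) = (1/σ²)(log((1-x)/x))² satisfies L h₁(x) = 1 for all x ∈ (0,1), where L v(x) = x(1-x)(μ - σ²x) v'(x) + (σ²/2) x²(1-x)² v''(x). -/
/-!
In the coordinate `y = log ((1 - x) / x)` the risky-fraction diffusion becomes a Brownian motion
with drift `σ²/2 - μ` and volatility `σ`, so `L (f ∘ y) = σ²/2 f'' - (μ - σ²/2) f'`. For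
`μ = σ²/2` the drift vanishes, and `f y = y² / σ²` gives `L h₁ = σ²/2 · 2/σ² = 1`.
-/

open Real Set Filter Topology

noncomputable def negLogit (x : ℝ) : ℝ := log ((1 - x) / x)

lemma hasDerivAt_negLogit {x : ℝ} (hx : x ∈ Ioo 0 1) :
    HasDerivAt negLogit (-(x * (1 - x))⁻¹) x := by
  obtain ⟨hx0, hx1⟩ := hx
  have hodds : HasDerivAt (fun y => (1 - y) / y) ((-1 * x - (1 - x) * 1) / x ^ 2) x :=
    ((hasDerivAt_id x).const_sub 1).div (hasDerivAt_id x) hx0.ne'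
  refine (hodds.log (div_pos (sub_pos.2 hx1) hx0).ne').congr_deriv ?_
  field_simp [(sub_pos.2 hx1).ne', hx0.ne']
  ring

section Generator

variable {f f' f'' : ℝ → ℝ}

lemma hasDerivAt_comp_negLogit (hf : ∀ y, HasDerivAt f (f' y) y) {x : ℝ} (hx : x ∈ Ioo 0 1) :
    HasDerivAt (fun y => f (negLogit y)) (-f' (negLogit x) * (x * (1 - x))⁻¹) x :=
  ((hf (negLogit x)).comp x (hasDerivAt_negLogit hx)).congr_deriv (by ring)

lemma deriv_comp_negLogit_eventuallyEq (hf : ∀ y, HasDerivAt f (f' y) y) {x : ℝ}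
    (hx : x ∈ Ioo 0 1) :
    deriv (fun y => f (negLogit y)) =ᶠ[𝓝 x]
      fun y => -f' (negLogit y) * (y * (1 - y))⁻¹ := by
  filter_upwards [isOpen_Ioo.mem_nhds hx] with y hy
  exact (hasDerivAt_comp_negLogit hf hy).deriv

lemma hasDerivAt_deriv_comp_negLogit (hf : ∀ y, HasDerivAt f (f' y) y)
    (hf' : ∀ y, HasDerivAt f' (f'' y) y) {x : ℝ} (hx : x ∈ Ioo 0 1) :
    HasDerivAt (deriv fun y => f (negLogit y))
      ((f'' (negLogit x) + (1 - 2 * x) * f' (negLogit x)) / (x * (1 - x)) ^ 2) x := by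
  have hx0 : x ≠ 0 := hx.1.ne'
  have hx1 : 1 - x ≠ 0 := (sub_pos.2 hx.2).ne'
  have hweight : HasDerivAt (fun y => (y * (1 - y))⁻¹)
      (-(1 * (1 - x) + x * -1) / (x * (1 - x)) ^ 2) x :=
    ((hasDerivAt_id x).mul ((hasDerivAt_id x).const_sub 1)).inv (mul_ne_zero hx0 hx1)
  have h := ((hasDerivAt_comp_negLogit hf' hx).neg.mul hweight).congr_of_eventuallyEq
    (deriv_comp_negLogit_eventuallyEq hf hx)
  refine h.congr_deriv ?_
  rw [Pi.neg_apply]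
  field_simp
  ring

theorem generator_comp_negLogit (hf : ∀ y, HasDerivAt f (f' y) y)
    (hf' : ∀ y, HasDerivAt f' (f'' y) y) (μ σ : ℝ) {x : ℝ} (hx : x ∈ Ioo 0 1) :
    x * (1 - x) * (μ - σ ^ 2 * x) * deriv (fun y => f (negLogit y)) x
        + σ ^ 2 / 2 * (x ^ 2 * (1 - x) ^ 2) * deriv (deriv fun y => f (negLogit y)) x
      = σ ^ 2 / 2 * f'' (negLogit x) - (μ - σ ^ 2 / 2) * f' (negLogit x) := by
  have hx0 : x ≠ 0 := hx.1.ne'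
  have hx1 : 1 - x ≠ 0 := (sub_pos.2 hx.2).ne'
  rw [(hasDerivAt_comp_negLogit hf hx).deriv, (hasDerivAt_deriv_comp_negLogit hf hf' hx).deriv]
  field_simp
  ring

end Generator

/-- For `μ = σ²/2` (Merton ratio `π* = 1/2`), the function
`h₁(x) = (1/σ²)(log((1-x)/x))²` satisfies `L h₁ = 1` on `(0,1)`, where
`L v(x) = x(1-x)(μ - σ²x) v'(x) + (σ²/2) x²(1-x)² v''(x)`. -/
theorem stmt_4 (μ σ : ℝ) (hσ : 0 < σ) (hμ : μ = σ ^ 2 / 2)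
    (h₁ : ℝ → ℝ)
    (hh₁ : ∀ x : ℝ, h₁ x = (1 / σ ^ 2) * (Real.log ((1 - x) / x)) ^ 2) :
    ∀ x ∈ Set.Ioo (0 : ℝ) 1,
      x * (1 - x) * (μ - σ ^ 2 * x) * deriv h₁ x
        + σ ^ 2 / 2 * (x ^ 2 * (1 - x) ^ 2) * deriv (deriv h₁) x = 1 := by
  intro x hx
  have hh₁' : h₁ = fun y => 1 / σ ^ 2 * negLogit y ^ 2 := funext hh₁
  have hf : ∀ y : ℝ, HasDerivAt (fun y => 1 / σ ^ 2 * y ^ 2) (1 / σ ^ 2 * (2 * y)) y := fun y =>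
    ((hasDerivAt_pow 2 y).const_mul (1 / σ ^ 2)).congr_deriv (by ring)
  have hf' : ∀ y : ℝ, HasDerivAt (fun y => 1 / σ ^ 2 * (2 * y)) (1 / σ ^ 2 * 2) y := fun y =>
    (((hasDerivAt_id y).const_mul 2).const_mul (1 / σ ^ 2)).congr_deriv (by ring)
  rw [hh₁', generator_comp_negLogit hf hf' μ σ hx, hμ]
  field_simp [hσ.ne']
  ring
end

section
/- Let σ > 0, μ = σ²/2, and λ ∈ ℝ. Define v(x) = (λ/σ²)(log(x/(1-x)))² + (1/2) log(4x(1-x)) for x ∈ (0,1), and g(x) = x(μ - (σ²/2)x). Then for every π ∈ (0,1), L v(π) + g(π) - λ = 0, where L v(π) = π(1-π)(μ - σ²π) v'(π) + (σ²/2) π²(1-π)² v''(π). In particular, conditions (iii) and (v) of the Verification Theorem (L v + g - λ ≤ 0 on (0,1), with equality on the continuation region) hold for this v and λ. -/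
/-!
In the logit coordinate `ℓ(π) = log (π / (1 - π))` the risky fraction with `μ = σ² / 2` is the
driftless Brownian motion `σ W`, so `L ℓ = 0`. Since `ℓ' = 1 / (π (1 - π))`, the carré du champ
`σ² π² (1 - π)² ℓ'²` equals `σ²`, whence `L (ℓ²) = 2 ℓ L ℓ + σ² = σ²`. Moreover `L` sends
`½ log (4 π (1 - π))` to `-g`. Hence `L v = (λ / σ²) σ² - g = λ - g`.
-/

section LogitCoordinates

open Real Set Filter

lemma deriv_and_deriv_deriv_of_eqOn {f F F' : ℝ → ℝ} {U : Set ℝ} {x F'' : ℝ}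
    (hU : IsOpen U) (hx : x ∈ U) (hfF : EqOn f F U)
    (hF : ∀ y ∈ U, HasDerivAt F (F' y) y) (hF' : HasDerivAt F' F'' x) :
    deriv f x = F' x ∧ deriv (deriv f) x = F'' := by
  have hderiv : EqOn (deriv f) F' U := fun y hy =>
    (eventuallyEq_of_mem (hU.mem_nhds hy) hfF).deriv_eq.trans (hF y hy).deriv
  exact ⟨hderiv hx, (eventuallyEq_of_mem (hU.mem_nhds hx) hderiv).deriv_eq.trans hF'.deriv⟩

lemma hasDerivAt_one_sub (x : ℝ) : HasDerivAt (fun y : ℝ => 1 - y) (-1) x := by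
  simpa using (hasDerivAt_id x).const_sub 1

variable {x : ℝ}

lemma hasDerivAt_log_one_sub (hx : x ≠ 1) :
    HasDerivAt (fun y => log (1 - y)) (-(1 - x)⁻¹) x := by
  simpa [neg_div, one_div] using (hasDerivAt_one_sub x).log (sub_ne_zero.2 hx.symm)

lemma hasDerivAt_inv_one_sub (hx : x ≠ 1) :
    HasDerivAt (fun y => (1 - y)⁻¹) ((1 - x) ^ 2)⁻¹ x := by
  simpa using (hasDerivAt_one_sub x).fun_inv (sub_ne_zero.2 hx.symm)

lemma log_div_one_sub_eq (hx0 : x ≠ 0) (hx1 : x ≠ 1) :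
    log (x / (1 - x)) = log x - log (1 - x) :=
  log_div hx0 (sub_ne_zero.2 hx1.symm)

lemma log_four_mul_mul_one_sub_eq (hx0 : x ≠ 0) (hx1 : x ≠ 1) :
    log (4 * x * (1 - x)) = log 4 + (log x + log (1 - x)) := by
  rw [log_mul (by positivity) (sub_ne_zero.2 hx1.symm), log_mul (by norm_num) hx0, add_assoc]

lemma hasDerivAt_logit (hx0 : x ≠ 0) (hx1 : x ≠ 1) :
    HasDerivAt (fun y => log y - log (1 - y)) (x⁻¹ + (1 - x)⁻¹) x := by
  simpa using (hasDerivAt_log hx0).fun_sub (hasDerivAt_log_one_sub hx1)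

lemma hasDerivAt_log_add_log_one_sub (hx0 : x ≠ 0) (hx1 : x ≠ 1) :
    HasDerivAt (fun y => log y + log (1 - y)) (x⁻¹ - (1 - x)⁻¹) x := by
  simpa [sub_eq_add_neg] using (hasDerivAt_log hx0).fun_add (hasDerivAt_log_one_sub hx1)

lemma hasDerivAt_candidate (c : ℝ) (hx0 : x ≠ 0) (hx1 : x ≠ 1) :
    HasDerivAt (fun y => c * (log y - log (1 - y)) ^ 2 + 1 / 2 * (log 4 + (log y + log (1 - y))))
      (2 * c * (log x - log (1 - x)) * (x⁻¹ + (1 - x)⁻¹) + (x⁻¹ - (1 - x)⁻¹) / 2) x := by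
  refine ((((hasDerivAt_logit hx0 hx1).fun_pow 2).const_mul c).fun_add
    ((hasDerivAt_log_add_log_one_sub hx0 hx1).const_add (log 4) |>.const_mul (1 / 2))).congr_deriv ?_
  push_cast
  ring

lemma hasDerivAt_candidate_deriv (c : ℝ) (hx0 : x ≠ 0) (hx1 : x ≠ 1) :
    HasDerivAt (fun y => 2 * c * (log y - log (1 - y)) * (y⁻¹ + (1 - y)⁻¹) + (y⁻¹ - (1 - y)⁻¹) / 2)
      (2 * c * ((x⁻¹ + (1 - x)⁻¹) ^ 2 + (log x - log (1 - x)) * (((1 - x) ^ 2)⁻¹ - (x ^ 2)⁻¹))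
        - ((x ^ 2)⁻¹ + ((1 - x) ^ 2)⁻¹) / 2) x := by
  have hinv := hasDerivAt_inv hx0
  have hinv_one_sub := hasDerivAt_inv_one_sub hx1
  refine ((((hasDerivAt_logit hx0 hx1).const_mul (2 * c)).fun_mul
    (hinv.fun_add hinv_one_sub)).fun_add ((hinv.fun_sub hinv_one_sub).div_const 2)).congr_deriv ?_
  ring

lemma eqOn_candidate {v : ℝ → ℝ} {c : ℝ}
    (hv : ∀ x, v x = c * log (x / (1 - x)) ^ 2 + 1 / 2 * log (4 * x * (1 - x))) :
    EqOn v (fun y => c * (log y - log (1 - y)) ^ 2 + 1 / 2 * (log 4 + (log y + log (1 - y))))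
      (Ioo 0 1) := fun y ⟨hy0, hy1⟩ => by
  rw [hv, log_div_one_sub_eq hy0.ne' hy1.ne, log_four_mul_mul_one_sub_eq hy0.ne' hy1.ne]

end LogitCoordinates

/-- For `μ = σ²/2`, any `λ ∈ ℝ`, and the candidate value function
`v(x) = (λ/σ²)(log(x/(1-x)))² + (1/2) log(4x(1-x))`, one has
`L v(π) + g(π) - λ = 0` for all `π ∈ (0,1)`, where
`L v(π) = π(1-π)(μ - σ²π) v'(π) + (σ²/2) π²(1-π)² v''(π)` and
`g(x) = x(μ - σ²/2 x)`. -/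
theorem stmt_8 (μ σ lam : ℝ) (hσ : 0 < σ) (hμ : μ = σ ^ 2 / 2)
    (v g : ℝ → ℝ)
    (hv : ∀ x : ℝ, v x = (lam / σ ^ 2) * (Real.log (x / (1 - x))) ^ 2
        + (1 / 2) * Real.log (4 * x * (1 - x)))
    (hg : ∀ x : ℝ, g x = x * (μ - σ ^ 2 / 2 * x)) :
    ∀ π ∈ Set.Ioo (0 : ℝ) 1,
      π * (1 - π) * (μ - σ ^ 2 * π) * deriv v π
        + σ ^ 2 / 2 * (π ^ 2 * (1 - π) ^ 2) * deriv (deriv v) π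
        + g π - lam = 0 := by
  intro π hπ
  obtain ⟨hv', hv''⟩ := deriv_and_deriv_deriv_of_eqOn isOpen_Ioo hπ (eqOn_candidate hv)
    (fun y hy => hasDerivAt_candidate _ hy.1.ne' hy.2.ne)
    (hasDerivAt_candidate_deriv _ hπ.1.ne' hπ.2.ne)
  rw [hv', hv'', hg, hμ]
  have hσ0 : σ ≠ 0 := hσ.ne'
  have hπ0 : π ≠ 0 := hπ.1.ne'
  have hπ1 : 1 - π ≠ 0 := sub_ne_zero.2 hπ.2.ne'
  -- the `log` terms cancel since `L ℓ = 0`, the rest is a rational identity in `π`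
  field_simp
  ring
end

section
/- Let σ > 0 and h > 0. Set b = e^{σ√h}/(1 + e^{σ√h}), a = 1 - b, λ = σ²(b - 1/2)/(2 log(b/(1-b))), v(x) = (λ/σ²)(log(x/(1-x)))² + (1/2) log(4x(1-x)), and c = v(1/2) - v(b). Then: (i) v(1-x) = v(x) for all x ∈ (0,1); (ii) v is nonincreasing on [1/2, b]; and consequently (iii) v(π') - v(π) ≤ c for all π, π' ∈ [a, b]. -/
/-!
Write `L(x) = log (x / (1 - x))`. Then `v = k L² + ½ log (4x(1-x))` with
`k = λ / σ² = (b - ½) / (2 L(b))`, and `v` is even about `½` since `L(1 - x) = -L(x)`.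
On `(½, b)` one computes `x(1-x) v'(x) = 2k L(x) - (x - ½)`, which is `≤ 0` because the
convexity of `L` on `[½, 1)` together with `L(½) = 0` gives `L(x) / (x - ½) ≤ L(b) / (b - ½)`.
Hence `v` decreases on `[½, b]`, and by symmetry `v(b) ≤ v ≤ v(½)` on `[1 - b, b]`.
-/

open Set

noncomputable section

namespace MertonExample

def logit (x : ℝ) : ℝ := Real.log (x / (1 - x))

def coeff (p : ℝ) : ℝ := (p - 1 / 2) / (2 * logit p)

def value (k x : ℝ) : ℝ := k * logit x ^ 2 + 1 / 2 * Real.log (4 * x * (1 - x))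

lemma logit_one_sub (x : ℝ) : logit (1 - x) = -logit x := by
  rw [logit, logit, sub_sub_cancel, ← Real.log_inv, inv_div]

lemma logit_half : logit (1 / 2) = 0 := by
  norm_num [logit]

lemma logit_pos {x : ℝ} (hx : 1 / 2 < x) (hx1 : x < 1) : 0 < logit x :=
  Real.log_pos <| (one_lt_div (by linarith)).2 (by linarith)

lemma hasDerivAt_logit {x : ℝ} (hx0 : 0 < x) (hx1 : x < 1) :
    HasDerivAt logit (1 / (x * (1 - x))) x := by
  have h1x : 1 - x ≠ 0 := by linarith
  have hquot : HasDerivAt (fun y => y / (1 - y)) ((1 * (1 - x) - x * (-1)) / (1 - x) ^ 2) x :=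
    (hasDerivAt_id x).div ((hasDerivAt_id x).const_sub 1) h1x
  refine (hquot.log (div_ne_zero hx0.ne' h1x)).congr_deriv ?_
  field_simp
  ring

lemma convexOn_logit : ConvexOn ℝ (Ico (1 / 2) 1) logit := by
  have hderiv : ∀ x ∈ Ico (1 / 2 : ℝ) 1, HasDerivAt logit (1 / (x * (1 - x))) x :=
    fun x hx => hasDerivAt_logit (by linarith [hx.1]) hx.2
  refine MonotoneOn.convexOn_of_deriv (convex_Ico _ _)
    (fun x hx => (hderiv x hx).continuousAt.continuousWithinAt)
    (fun x hx => (hderiv x (interior_subset hx)).differentiableAt.differentiableWithinAt) ?_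
  rw [interior_Ico]
  intro x hx y hy hxy
  rw [(hderiv x (Ioo_subset_Ico_self hx)).deriv, (hderiv y (Ioo_subset_Ico_self hy)).deriv]
  have hy0 : 0 < y * (1 - y) := mul_pos (by linarith [hy.1]) (by linarith [hy.2])
  exact one_div_le_one_div_of_le hy0 (by nlinarith [hx.1])

lemma sub_half_mul_logit_le {x p : ℝ} (hx : 1 / 2 < x) (hxp : x ≤ p) (hp : p < 1) :
    (p - 1 / 2) * logit x ≤ (x - 1 / 2) * logit p := by
  have hslope := convexOn_logit.secant_mono (a := 1 / 2) ⟨le_rfl, by linarith⟩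
    ⟨hx.le, by linarith⟩ ⟨by linarith, hp⟩ hx.ne' (by linarith : p ≠ 1 / 2) hxp
  rw [logit_half, sub_zero, sub_zero, div_le_div_iff₀ (by linarith) (by linarith)] at hslope
  linarith

lemma value_one_sub (k x : ℝ) : value k (1 - x) = value k x := by
  rw [value, value, logit_one_sub, sub_sub_cancel]
  ring_nf

lemma hasDerivAt_value (k : ℝ) {x : ℝ} (hx0 : 0 < x) (hx1 : x < 1) :
    HasDerivAt (value k) ((2 * k * logit x - (x - 1 / 2)) / (x * (1 - x))) x := by
  have h1x : 1 - x ≠ 0 := by linarith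
  have hquad : HasDerivAt (fun y => 4 * y * (1 - y)) (4 * 1 * (1 - x) + 4 * x * (-1)) x :=
    ((hasDerivAt_id x).const_mul 4).mul ((hasDerivAt_id x).const_sub 1)
  have hsum := (((hasDerivAt_logit hx0 hx1).pow 2).const_mul k).add
    ((hquad.log (by positivity)).const_mul (1 / 2))
  refine hsum.congr_deriv ?_
  field_simp
  ring

theorem antitoneOn_value {p : ℝ} (hp : p < 1) :
    AntitoneOn (value (coeff p)) (Icc (1 / 2) p) := by
  have hderiv : ∀ x ∈ Icc (1 / 2 : ℝ) p,
      HasDerivAt (value (coeff p)) ((2 * coeff p * logit x - (x - 1 / 2)) / (x * (1 - x))) x :=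
    fun x hx => hasDerivAt_value (coeff p) (by linarith [hx.1]) (by linarith [hx.2])
  refine antitoneOn_of_deriv_nonpos (convex_Icc _ _)
    (fun x hx => (hderiv x hx).continuousAt.continuousWithinAt)
    (fun x hx => (hderiv x (interior_subset hx)).differentiableAt.differentiableWithinAt) ?_
  rw [interior_Icc]
  intro x hx
  rw [(hderiv x (Ioo_subset_Icc_self hx)).deriv]
  have hLp : 0 < logit p := logit_pos (hx.1.trans hx.2) hp
  have hkL : 2 * coeff p * logit x ≤ x - 1 / 2 := by
    rw [show 2 * coeff p * logit x = (p - 1 / 2) * logit x / logit p by rw [coeff]; field_simp,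
      div_le_iff₀ hLp]
    exact sub_half_mul_logit_le hx.1 hx.2.le hp
  exact div_nonpos_of_nonpos_of_nonneg (by linarith)
    (mul_pos (by linarith [hx.1]) (by linarith [hx.2])).le

theorem value_mem_Icc {p x : ℝ} (hp : p < 1) (hx : x ∈ Icc (1 - p) p) :
    value (coeff p) x ∈ Icc (value (coeff p) p) (value (coeff p) (1 / 2)) := by
  have hanti := antitoneOn_value hp
  wlog hx2 : 1 / 2 ≤ x generalizing x
  · rw [← value_one_sub _ x]
    exact this (x := 1 - x) ⟨by linarith [hx.2], by linarith [hx.1]⟩ (by linarith [not_le.1 hx2])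
  have hmem : x ∈ Icc (1 / 2) p := ⟨hx2, hx.2⟩
  have hp2 : 1 / 2 ≤ p := hx2.trans hx.2
  exact ⟨hanti hmem ⟨hp2, le_rfl⟩ hx.2, hanti ⟨le_rfl, hp2⟩ hmem hx2⟩

end MertonExample

end

open MertonExample

theorem stmt_11_general (σ h : ℝ) (hσ : 0 < σ)
    (a b lam c : ℝ)
    (hb : b = Real.exp (σ * Real.sqrt h) / (1 + Real.exp (σ * Real.sqrt h)))
    (ha : a = 1 - b)
    (hlam : lam = σ ^ 2 * (b - 1 / 2) / (2 * Real.log (b / (1 - b))))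
    (v : ℝ → ℝ)
    (hv : ∀ x : ℝ, v x = (lam / σ ^ 2) * (Real.log (x / (1 - x))) ^ 2
        + (1 / 2) * Real.log (4 * x * (1 - x)))
    (hc : c = v (1 / 2) - v b) :
    (∀ x ∈ Set.Ioo (0 : ℝ) 1, v (1 - x) = v x) ∧
    AntitoneOn v (Set.Icc (1 / 2) b) ∧
    (∀ π ∈ Set.Icc a b, ∀ π' ∈ Set.Icc a b, v π' - v π ≤ c) := by
  have hb1 : b < 1 := by
    rw [hb, div_lt_one (by positivity)]
    linarith
  have hk : lam / σ ^ 2 = coeff b := by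
    rw [hlam, coeff, logit]
    field_simp
  obtain rfl : v = value (coeff b) := by
    funext x
    rw [hv, hk]
    rfl
  subst ha hc
  refine ⟨fun x _ => value_one_sub _ x, antitoneOn_value hb1, fun π hπ π' hπ' => ?_⟩
  have hπ_ge := (value_mem_Icc hb1 hπ).1
  have hπ'_le := (value_mem_Icc hb1 hπ').2
  linarith

/-- In the explicit example (`γ = 0`, `π* = 1/2`), with
`b = e^{σ√h}/(1+e^{σ√h})`, `a = 1-b`, `λ = σ²(b-1/2)/(2 log(b/(1-b)))`,
`v(x) = (λ/σ²)(log(x/(1-x)))² + (1/2) log(4x(1-x))`, `c = v(1/2) - v(b)`: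
(i) `v(1-x) = v(x)` for `x ∈ (0,1)`; (ii) `v` is nonincreasing on `[1/2, b]`;
and (iii) `v(π') - v(π) ≤ c` for all `π, π' ∈ [a,b]`. -/
theorem stmt_11 (σ h : ℝ) (hσ : 0 < σ) (hh : 0 < h)
    (a b lam c : ℝ)
    (hb : b = Real.exp (σ * Real.sqrt h) / (1 + Real.exp (σ * Real.sqrt h)))
    (ha : a = 1 - b)
    (hlam : lam = σ ^ 2 * (b - 1 / 2) / (2 * Real.log (b / (1 - b))))
    (v : ℝ → ℝ)
    (hv : ∀ x : ℝ, v x = (lam / σ ^ 2) * (Real.log (x / (1 - x))) ^ 2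
        + (1 / 2) * Real.log (4 * x * (1 - x)))
    (hc : c = v (1 / 2) - v b) :
    (∀ x ∈ Set.Ioo (0 : ℝ) 1, v (1 - x) = v x) ∧
    AntitoneOn v (Set.Icc (1 / 2) b) ∧
    (∀ π ∈ Set.Icc a b, ∀ π' ∈ Set.Icc a b, v π' - v π ≤ c) :=
  stmt_11_general σ h hσ a b lam c hb ha hlam v hv hc
end

section
/- Let μ ∈ ℝ, σ > 0, h > 0 and x > 0. Let (ξ_n)_{n≥0} be an i.i.d. sequence of standard Gaussian random variables and set Z_n = exp(σ√h·ξ_n + (μ - σ²/2)h). Define A(h) = sup_{a ∈ [0,1]} E[log(a·Z_0 + (1-a))]. Then for every N ∈ ℕ, sup E[log X_N] = N·A(h) + log x, where the supremum is over all sequences (a_0, …, a_{N-1}) of [0,1]-valued random variables such that a_n is measurable with respect to σ(Z_0, …, Z_{n-1}) for each n, and X_N = x·∏_{n=0}^{N-1}(a_n·Z_n + (1 - a_n)). -/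
/-!
The expected log-wealth is `log x` plus the sum of the one-period expected log-returns,
all integrable because `a Z + (1 - a)` lies between `1` and `Z`, so `|log (a Z + 1 - a)| ≤ |log Z|`.
An adapted fraction `a_n` is a function of `Z_0, …, Z_{n-1}`, hence independent of `Z_n`;
integrating first over `Z_n` against the product of the two laws bounds its expected
log-return by the supremum `A` over constant fractions. Constant fractions give exactly
`N · E[log (b Z_0 + 1 - b)] + log x`, and taking the supremum over `b` gives the value.
The Gaussian law only enters through the integrability of `log Z_0`.
-/

open MeasureTheory ProbabilityTheory

open Real Set

lemma mul_add_one_sub_pos {a z : ℝ} (ha : a ∈ Icc (0 : ℝ) 1) (hz : 0 < z) :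
    0 < a * z + (1 - a) := by
  nlinarith [ha.1, ha.2, mul_nonneg ha.1 hz.le]

lemma abs_log_mul_add_one_sub_le {a z : ℝ} (ha : a ∈ Icc (0 : ℝ) 1) (hz : 0 < z) :
    |log (a * z + (1 - a))| ≤ |log z| := by
  have hw := mul_add_one_sub_pos ha hz
  rcases le_total 1 z with h1 | h1
  · have h1w : 1 ≤ a * z + (1 - a) := by nlinarith [ha.1]
    have hwz : a * z + (1 - a) ≤ z := by nlinarith [ha.2]
    rw [abs_of_nonneg (log_nonneg h1w), abs_of_nonneg (log_nonneg h1)]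
    exact log_le_log hw hwz
  · have hzw : z ≤ a * z + (1 - a) := by nlinarith [ha.2]
    have hw1 : a * z + (1 - a) ≤ 1 := by nlinarith [ha.1]
    rw [abs_of_nonpos (log_nonpos hw.le hw1), abs_of_nonpos (log_nonpos hz.le h1)]
    exact neg_le_neg (log_le_log hz hzw)

section

variable {Ω : Type*} [MeasurableSpace Ω] {P : Measure Ω}

lemma integrable_log_mul_add_one_sub {a Z : Ω → ℝ} (hma : Measurable a)
    (ha : ∀ ω, a ω ∈ Icc (0 : ℝ) 1) (hmZ : Measurable Z) (hZ : ∀ ω, 0 < Z ω)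
    (hlogZ : Integrable (fun ω ↦ log (Z ω)) P) :
    Integrable (fun ω ↦ log (a ω * Z ω + (1 - a ω))) P :=
  hlogZ.mono ((hma.mul hmZ).add (measurable_const.sub hma)).log.aestronglyMeasurable <|
    ae_of_all _ fun ω ↦ abs_log_mul_add_one_sub_le (ha ω) (hZ ω)

lemma integral_log_mul_add_one_sub_le_of_indepFun [IsProbabilityMeasure P] {a Z : Ω → ℝ}
    (hma : Measurable a) (ha : ∀ ω, a ω ∈ Icc (0 : ℝ) 1) (hmZ : Measurable Z)
    (hZ : ∀ ω, 0 < Z ω) (hlogZ : Integrable (fun ω ↦ log (Z ω)) P) (hind : IndepFun a Z P)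
    {A : ℝ} (hA : ∀ b ∈ Icc (0 : ℝ) 1, ∫ ω, log (b * Z ω + (1 - b)) ∂P ≤ A) :
    ∫ ω, log (a ω * Z ω + (1 - a ω)) ∂P ≤ A := by
  set F : ℝ × ℝ → ℝ := fun p ↦ log (p.1 * p.2 + (1 - p.1))
  have hmF : Measurable F :=
    ((measurable_fst.mul measurable_snd).add (measurable_const.sub measurable_fst)).log
  have hlaw : P.map (fun ω ↦ (a ω, Z ω)) = (P.map a).prod (P.map Z) :=
    (indepFun_iff_map_prod_eq_prod_map_map hma.aemeasurable hmZ.aemeasurable).mp hind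
  have hmaZ : AEMeasurable (fun ω ↦ (a ω, Z ω)) P := by fun_prop
  have hF : Integrable F ((P.map a).prod (P.map Z)) := by
    rw [← hlaw, integrable_map_measure hmF.aestronglyMeasurable hmaZ]
    exact integrable_log_mul_add_one_sub hma ha hmZ hZ hlogZ
  have ha_law : ∀ᵐ b ∂P.map a, b ∈ Icc (0 : ℝ) 1 :=
    (ae_map_iff hma.aemeasurable measurableSet_Icc).mpr (ae_of_all _ ha)
  have : IsProbabilityMeasure (P.map a) := Measure.isProbabilityMeasure_map hma.aemeasurable
  calc ∫ ω, log (a ω * Z ω + (1 - a ω)) ∂P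
      = ∫ b, ∫ z, F (b, z) ∂P.map Z ∂P.map a := by
        rw [← integral_prod F hF, ← hlaw, integral_map hmaZ hmF.aestronglyMeasurable]
    _ ≤ ∫ _, A ∂P.map a := by
        refine integral_mono_ae hF.integral_prod_left (integrable_const A) ?_
        filter_upwards [ha_law] with b hb
        rw [integral_map (f := fun z ↦ F (b, z)) hmZ.aemeasurable
          (hmF.comp measurable_prodMk_left).aestronglyMeasurable]
        exact hA b hb
    _ = A := by simp

lemma indepFun_of_measurable_comap_prefix {β γ : Type*} [MeasurableSpace β] [MeasurableSpace γ]
    {Z : ℕ → Ω → β} (hmZ : ∀ n, Measurable (Z n)) (hind : iIndepFun Z P) {n : ℕ} {a : Ω → γ}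
    (ha : Measurable[MeasurableSpace.comap (fun ω (i : Fin n) ↦ Z i ω) inferInstance] a) :
    IndepFun a (Z n) P := by
  have hdisj : Disjoint (Finset.range n) {n} := by simp
  have hblock : IndepFun (fun ω (i : Fin n) ↦ Z i ω) (Z n) P :=
    (hind.indepFun_finset _ _ hdisj hmZ).comp
      (φ := fun (v : Finset.range n → β) (i : Fin n) ↦ v ⟨i, Finset.mem_range.mpr i.isLt⟩)
      (ψ := fun (v : ({n} : Finset ℕ) → β) ↦ v ⟨n, Finset.mem_singleton_self n⟩)
      (by fun_prop) (measurable_pi_apply _)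
  rw [IndepFun_iff_Indep] at hblock ⊢
  exact indep_of_indep_of_le_left hblock ha.comap_le

end

section

variable {Ω : Type*} [MeasurableSpace Ω] {P : Measure Ω} [IsProbabilityMeasure P]

lemma integral_log_wealth {x : ℝ} (hx : 0 < x) {a Z : ℕ → Ω → ℝ} (hma : ∀ n, Measurable (a n))
    (ha : ∀ n ω, a n ω ∈ Icc (0 : ℝ) 1) (hmZ : ∀ n, Measurable (Z n)) (hZ : ∀ n ω, 0 < Z n ω)
    (hlogZ : ∀ n, Integrable (fun ω ↦ log (Z n ω)) P) (N : ℕ) :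
    ∫ ω, log (x * ∏ n ∈ Finset.range N, (a n ω * Z n ω + (1 - a n ω))) ∂P
      = log x + ∑ n ∈ Finset.range N, ∫ ω, log (a n ω * Z n ω + (1 - a n ω)) ∂P := by
  have hfactor : ∀ n ω, a n ω * Z n ω + (1 - a n ω) ≠ 0 :=
    fun n ω ↦ (mul_add_one_sub_pos (ha n ω) (hZ n ω)).ne'
  have hint : ∀ n, Integrable (fun ω ↦ log (a n ω * Z n ω + (1 - a n ω))) P :=
    fun n ↦ integrable_log_mul_add_one_sub (hma n) (ha n) (hmZ n) (hZ n) (hlogZ n)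
  simp_rw [log_mul hx.ne' (Finset.prod_ne_zero_iff.mpr fun n _ ↦ hfactor n _),
    log_prod fun n _ ↦ hfactor n _]
  rw [integral_add (integrable_const _) (integrable_finsetSum _ fun n _ ↦ hint n),
    integral_finsetSum _ fun n _ ↦ hint n, integral_const, probReal_univ, one_smul]

theorem sSup_integral_log_wealth {Z : ℕ → Ω → ℝ} (hmZ : ∀ n, Measurable (Z n))
    (hZ : ∀ n ω, 0 < Z n ω) (hind : iIndepFun Z P) (hident : ∀ n, IdentDistrib (Z n) (Z 0) P P)
    (hlogZ : Integrable (fun ω ↦ log (Z 0 ω)) P) {x : ℝ} (hx : 0 < x) (N : ℕ) :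
    sSup {r : ℝ | ∃ a : ℕ → Ω → ℝ,
        (∀ n ω, a n ω ∈ Set.Icc (0 : ℝ) 1) ∧
        (∀ n, @Measurable Ω ℝ
          (MeasurableSpace.comap (fun ω (i : Fin n) => Z i ω) inferInstance) _ (a n)) ∧
        r = ∫ ω, Real.log
          (x * ∏ n ∈ Finset.range N, (a n ω * Z n ω + (1 - a n ω))) ∂P}
      = N * sSup {r : ℝ | ∃ a ∈ Set.Icc (0 : ℝ) 1,
          r = ∫ ω, Real.log (a * Z 0 ω + (1 - a)) ∂P} + log x := by
  set G := {r : ℝ | ∃ a ∈ Set.Icc (0 : ℝ) 1, r = ∫ ω, Real.log (a * Z 0 ω + (1 - a)) ∂P}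
  set S := {r : ℝ | ∃ a : ℕ → Ω → ℝ,
        (∀ n ω, a n ω ∈ Set.Icc (0 : ℝ) 1) ∧
        (∀ n, @Measurable Ω ℝ
          (MeasurableSpace.comap (fun ω (i : Fin n) => Z i ω) inferInstance) _ (a n)) ∧
        r = ∫ ω, Real.log
          (x * ∏ n ∈ Finset.range N, (a n ω * Z n ω + (1 - a n ω))) ∂P}
  have hlogZn : ∀ n, Integrable (fun ω ↦ log (Z n ω)) P :=
    fun n ↦ ((hident n).comp measurable_log).integrable_iff.mpr hlogZ
  have hstat : ∀ n b, ∫ ω, log (b * Z n ω + (1 - b)) ∂P = ∫ ω, log (b * Z 0 ω + (1 - b)) ∂P :=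
    fun n b ↦ ((hident n).comp (u := fun z ↦ log (b * z + (1 - b))) (by fun_prop)).integral_eq
  have hG_ne : G.Nonempty := ⟨_, 0, ⟨le_rfl, zero_le_one⟩, rfl⟩
  have hG_bdd : BddAbove G := by
    refine ⟨∫ ω, |log (Z 0 ω)| ∂P, ?_⟩
    rintro _ ⟨b, hb, rfl⟩
    refine integral_mono (integrable_log_mul_add_one_sub measurable_const (fun _ ↦ hb)
      (hmZ 0) (hZ 0) hlogZ) hlogZ.abs fun ω ↦ ?_
    exact (le_abs_self _).trans (abs_log_mul_add_one_sub_le hb (hZ 0 ω))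
  have hS_le : ∀ r ∈ S, r ≤ N * sSup G + log x := by
    rintro _ ⟨a, ha, hadapt, rfl⟩
    have hma : ∀ n, Measurable (a n) := fun n ↦
      (hadapt n).mono (measurable_pi_lambda (fun ω (i : Fin n) ↦ Z i ω) fun i ↦ hmZ i).comap_le
        le_rfl
    have hperiod : ∀ n, ∫ ω, log (a n ω * Z n ω + (1 - a n ω)) ∂P ≤ sSup G := fun n ↦
      integral_log_mul_add_one_sub_le_of_indepFun (hma n) (ha n) (hmZ n) (hZ n) (hlogZn n)
        (indepFun_of_measurable_comap_prefix hmZ hind (hadapt n))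
        fun b hb ↦ (hstat n b).trans_le (le_csSup hG_bdd ⟨b, hb, rfl⟩)
    rw [integral_log_wealth hx hma ha hmZ hZ hlogZn]
    have := Finset.sum_le_sum fun n (_ : n ∈ Finset.range N) ↦ hperiod n
    rw [Finset.sum_const, Finset.card_range, nsmul_eq_mul] at this
    linarith
  have hG_sub : (fun t ↦ N * t + log x) '' G ⊆ S := by
    rintro _ ⟨_, ⟨b, hb, rfl⟩, rfl⟩
    refine ⟨fun _ _ ↦ b, fun _ _ ↦ hb, fun _ ↦ measurable_const, ?_⟩
    rw [integral_log_wealth hx (fun _ ↦ measurable_const) (fun _ _ ↦ hb) hmZ hZ hlogZn,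
      Finset.sum_congr rfl fun n _ ↦ hstat n b, Finset.sum_const, Finset.card_range,
      nsmul_eq_mul, add_comm]
  have hsup : N * sSup G + log x = sSup ((fun t ↦ N * t + log x) '' G) :=
    Monotone.map_csSup_of_continuousAt (by fun_prop)
      ((monotone_id.const_mul (Nat.cast_nonneg N)).add_const _) hG_ne hG_bdd
  exact le_antisymm (csSup_le ((hG_ne.image _).mono hG_sub) hS_le)
    (hsup ▸ csSup_le_csSup ⟨_, hS_le⟩ (hG_ne.image _) hG_sub)

end

theorem stmt_15_general (μ σ h x : ℝ) (hx : 0 < x)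
    {Ω : Type*} [MeasurableSpace Ω] (P : Measure Ω) [IsProbabilityMeasure P]
    (ξ : ℕ → Ω → ℝ) (hmeas : ∀ n, Measurable (ξ n))
    (hindep : iIndepFun ξ P)
    (hgauss : ∀ n, P.map (ξ n) = gaussianReal 0 1)
    (Z : ℕ → Ω → ℝ)
    (hZ : ∀ n ω, Z n ω = Real.exp (σ * Real.sqrt h * ξ n ω + (μ - σ ^ 2 / 2) * h))
    (A : ℝ)
    (hA : A = sSup {r : ℝ | ∃ a ∈ Set.Icc (0 : ℝ) 1,
        r = ∫ ω, Real.log (a * Z 0 ω + (1 - a)) ∂P})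
    (N : ℕ) :
    sSup {r : ℝ | ∃ a : ℕ → Ω → ℝ,
        (∀ n ω, a n ω ∈ Set.Icc (0 : ℝ) 1) ∧
        (∀ n, @Measurable Ω ℝ
          (MeasurableSpace.comap (fun ω (i : Fin n) => Z i ω) inferInstance) _ (a n)) ∧
        r = ∫ ω, Real.log
          (x * ∏ n ∈ Finset.range N, (a n ω * Z n ω + (1 - a n ω))) ∂P}
      = N * A + Real.log x := by
  set g : ℝ → ℝ := fun t ↦ exp (σ * √h * t + (μ - σ ^ 2 / 2) * h)
  have hg : Measurable g := by fun_prop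
  have hZg : Z = fun n ↦ g ∘ ξ n := funext fun n ↦ funext (hZ n)
  have hξ0 : Integrable (ξ 0) P := by
    have hid : Integrable id (P.map (ξ 0)) := hgauss 0 ▸ (memLp_id_gaussianReal 1).integrable le_rfl
    exact hid.comp_measurable (hmeas 0)
  subst hZg hA
  refine sSup_integral_log_wealth (fun n ↦ hg.comp (hmeas n)) (fun _ _ ↦ exp_pos _)
    (hindep.comp _ fun _ ↦ hg) (fun n ↦ ?_) ?_ hx N
  · exact IdentDistrib.comp ⟨(hmeas n).aemeasurable, (hmeas 0).aemeasurable, by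
      rw [hgauss, hgauss]⟩ hg
  · simp only [Function.comp_apply, g, log_exp]
    exact (hξ0.const_mul _).add (integrable_const _)

/-- Proposition 4.1 (the h-investor): with `(ξ_n)` i.i.d. standard Gaussians,
one-period returns `Z_n = exp(σ√h ξ_n + (μ - σ²/2)h)`, and
`A(h) = sup_{a ∈ [0,1]} E[log(a Z_0 + (1-a))]`, for every `N ∈ ℕ` the supremum
of `E[log X_N]` over all adapted `[0,1]`-valued strategies `(a_n)` (with `a_n`
measurable with respect to `σ(Z_0,…,Z_{n-1})`), where
`X_N = x ∏_{n<N} (a_n Z_n + 1 - a_n)`, equals `N·A(h) + log x`. -/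
theorem stmt_15 (μ σ h x : ℝ) (hσ : 0 < σ) (hh : 0 < h) (hx : 0 < x)
    {Ω : Type*} [MeasurableSpace Ω] (P : Measure Ω) [IsProbabilityMeasure P]
    (ξ : ℕ → Ω → ℝ) (hmeas : ∀ n, Measurable (ξ n))
    (hindep : iIndepFun ξ P)
    (hgauss : ∀ n, P.map (ξ n) = gaussianReal 0 1)
    (Z : ℕ → Ω → ℝ)
    (hZ : ∀ n ω, Z n ω = Real.exp (σ * Real.sqrt h * ξ n ω + (μ - σ ^ 2 / 2) * h))
    (A : ℝ)
    (hA : A = sSup {r : ℝ | ∃ a ∈ Set.Icc (0 : ℝ) 1,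
        r = ∫ ω, Real.log (a * Z 0 ω + (1 - a)) ∂P})
    (N : ℕ) :
    sSup {r : ℝ | ∃ a : ℕ → Ω → ℝ,
        (∀ n ω, a n ω ∈ Set.Icc (0 : ℝ) 1) ∧
        (∀ n, @Measurable Ω ℝ
          (MeasurableSpace.comap (fun ω (i : Fin n) => Z i ω) inferInstance) _ (a n)) ∧
        r = ∫ ω, Real.log
          (x * ∏ n ∈ Finset.range N, (a n ω * Z n ω + (1 - a n ω))) ∂P}
      = N * A + Real.log x :=
  stmt_15_general μ σ h x hx P ξ hmeas hindep hgauss Z hZ A hA N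
end
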